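/- Let k, l be positive integers and let t = (t_1, ..., t_{2k}) be a tuple with each t_i ∈ {0, 1, ..., l}. Let α : ℕ → ℂ be a sequence satisfying |α_n| < 1 for all n, Σ_{n=0}^{∞} |α_{n+1} − α_n|^2 < ∞, and α_n → 0 as n → ∞. Then the series Σ_{n=0}^{∞} ( Re( ∏_{j=1}^{k} α_{n+t_{2j−1}} · conj(α_{n+t_{2j}}) ) − |α_n|^{2k} ) is convergent, i.e. its partial sums converge as N → ∞. -/

import Mathlib

/-!
Write `q n = ‖α n‖ ^ 2` and `p j n = α (n + a j) * conj (α (n + b j))`. All factors lie in the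
unit disk, so `∏ j, p j n` agrees with its first-order expansion
`q n ^ k + q n ^ (k - 1) * ∑ j, (p j n - q n)` up to `(∑ j, ‖p j n - q n‖) ^ 2`; this error is
summable because square-summability of the differences of `α` passes to all shifted differences
`α (n + a) - α (n + b)`. By the parallelogram identity,
`Re (p j n) - q n` is `(q (n + a j) - q n + q (n + b j) - q n) / 2` up to another square-summable
term, and `q n ^ m * (q (n + c) - q n)` differs by a summable amount from
`(q (n + c) ^ (m + 1) - q n ^ (m + 1)) / (m + 1)`, whose partial sums telescope and converge since
`q → 0`.
-/

open Filter Finset SummationFilter Topology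

theorem summable_conditional_nat_iff {G : Type*} [AddCommMonoid G] [TopologicalSpace G]
    {f : ℕ → G} :
    Summable f (conditional ℕ) ↔ ∃ S, Tendsto (fun N => ∑ n ∈ range N, f n) atTop (𝓝 S) := by
  simp only [Summable, HasSum, conditional_filter_eq_map_range, tendsto_map'_iff]
  rfl

theorem sum_range_sub_shift {G : Type*} [AddCommGroup G] (b : ℕ → G) (a N : ℕ) :
    ∑ n ∈ range N, (b (n + a) - b n) = ∑ i ∈ range a, b (N + i) - ∑ i ∈ range a, b i := by
  have h := sum_range_add b N a
  rw [add_comm, sum_range_add] at h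
  rw [sum_sub_distrib, sub_eq_sub_iff_add_eq_add]
  simp only [add_comm _ a]
  rw [add_comm, h, add_comm]

theorem summable_conditional_sub_add_of_tendsto_zero {G : Type*} [AddCommGroup G]
    [TopologicalSpace G] [IsTopologicalAddGroup G] {b : ℕ → G} (hb : Tendsto b atTop (𝓝 0))
    (a : ℕ) : Summable (fun n => b (n + a) - b n) (conditional ℕ) := by
  refine summable_conditional_nat_iff.2 ⟨0 - ∑ i ∈ range a, b i, ?_⟩
  simp only [sum_range_sub_shift]
  refine Tendsto.sub_const ?_ _
  simpa [add_comm] using tendsto_finsetSum (range a) fun i _ => hb.comp (tendsto_add_atTop_nat i)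

section ProductEstimates

variable {ι R : Type*} [NormedCommRing R] [NormOneClass R]

theorem norm_prod_sub_pow_le (s : Finset ι) (f : ι → R) {c : R} (hf : ∀ i ∈ s, ‖f i‖ ≤ 1)
    (hc : ‖c‖ ≤ 1) : ‖∏ i ∈ s, f i - c ^ #s‖ ≤ ∑ i ∈ s, ‖f i - c‖ := by
  induction s using Finset.cons_induction with
  | empty => simp
  | cons a s ha ih =>
    simp only [forall_mem_cons] at hf
    rw [prod_cons, sum_cons, card_cons, pow_succ',
      show f a * ∏ i ∈ s, f i - c * c ^ #s = (f a - c) * ∏ i ∈ s, f i + c * (∏ i ∈ s, f i - c ^ #s)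
        by ring]
    have hQ : ‖∏ i ∈ s, f i‖ ≤ 1 :=
      (norm_prod_le s f).trans (prod_le_one (fun _ _ => norm_nonneg _) hf.2)
    calc _ ≤ ‖f a - c‖ * ‖∏ i ∈ s, f i‖ + ‖c‖ * ‖∏ i ∈ s, f i - c ^ #s‖ :=
          (norm_add_le _ _).trans (add_le_add (norm_mul_le _ _) (norm_mul_le _ _))
      _ ≤ ‖f a - c‖ * 1 + 1 * ∑ i ∈ s, ‖f i - c‖ := by
          gcongr
          exact ih hf.2
      _ = _ := by ring

theorem norm_prod_sub_pow_sub_mul_sum_le (s : Finset ι) (f : ι → R) {c : R}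
    (hf : ∀ i ∈ s, ‖f i‖ ≤ 1) (hc : ‖c‖ ≤ 1) :
    ‖∏ i ∈ s, f i - c ^ #s - c ^ (#s - 1) * ∑ i ∈ s, (f i - c)‖ ≤ (∑ i ∈ s, ‖f i - c‖) ^ 2 := by
  induction s using Finset.cons_induction with
  | empty => simp
  | cons a s ha ih =>
    simp only [forall_mem_cons] at hf
    have hshift : c ^ #s * ∑ i ∈ s, (f i - c) = c * (c ^ (#s - 1) * ∑ i ∈ s, (f i - c)) := by
      rcases s.eq_empty_or_nonempty with rfl | hs
      · simp
      · rw [← mul_assoc, ← pow_succ', Nat.sub_add_cancel hs.card_pos]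
    rw [prod_cons, sum_cons, sum_cons, card_cons, Nat.add_sub_cancel, pow_succ', mul_add, hshift,
      show ∀ Q E : R, f a * Q - c * c ^ #s - (c ^ #s * (f a - c) + c * E)
        = (f a - c) * (Q - c ^ #s) + c * (Q - c ^ #s - E) from fun Q E => by ring]
    calc _ ≤ ‖f a - c‖ * ‖∏ i ∈ s, f i - c ^ #s‖
          + ‖c‖ * ‖∏ i ∈ s, f i - c ^ #s - c ^ (#s - 1) * ∑ i ∈ s, (f i - c)‖ :=
          (norm_add_le _ _).trans (add_le_add (norm_mul_le _ _) (norm_mul_le _ _))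
      _ ≤ ‖f a - c‖ * ∑ i ∈ s, ‖f i - c‖ + 1 * (∑ i ∈ s, ‖f i - c‖) ^ 2 := by
          gcongr
          exacts [norm_prod_sub_pow_le s f hf.2 hc, ih hf.2]
      _ ≤ _ := by
          nlinarith [norm_nonneg (f a - c), sum_nonneg fun i (_ : i ∈ s) => norm_nonneg (f i - c)]

end ProductEstimates

theorem summable_sq_norm_sub_add {E : Type*} [SeminormedAddCommGroup E] {u : ℕ → E}
    (hu : Summable fun n => ‖u (n + 1) - u n‖ ^ 2) (a b : ℕ) :
    Summable fun n => ‖u (n + a) - u (n + b)‖ ^ 2 := by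
  have hdiag : ∀ d, Summable fun n => ‖u (n + d) - u n‖ ^ 2 := by
    intro d
    induction d with
    | zero => simp
    | succ d ih =>
      refine Summable.of_nonneg_of_le (fun n => sq_nonneg _) (fun n => ?_)
        ((((summable_nat_add_iff d).2 hu).add ih).mul_left 2)
      calc ‖u (n + (d + 1)) - u n‖ ^ 2
          ≤ (‖u (n + d + 1) - u (n + d)‖ + ‖u (n + d) - u n‖) ^ 2 := by
            gcongr
            rw [← add_assoc]
            exact norm_sub_le_norm_sub_add_norm_sub _ _ _
        _ ≤ _ := add_sq_le
  rcases le_total b a with h | h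
  · obtain ⟨d, rfl⟩ := exists_add_of_le h
    simpa [add_assoc] using (summable_nat_add_iff b).2 (hdiag d)
  · obtain ⟨d, rfl⟩ := exists_add_of_le h
    simpa [add_assoc, norm_sub_rev] using (summable_nat_add_iff a).2 (hdiag d)

theorem summable_sq_sum {ι : Type*} (s : Finset ι) {e : ι → ℕ → ℝ}
    (he : ∀ j ∈ s, Summable fun n => e j n ^ 2) : Summable fun n => (∑ j ∈ s, e j n) ^ 2 :=
  Summable.of_nonneg_of_le (fun _ => sq_nonneg _) (fun _ => sq_sum_le_card_mul_sum_sq)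
    ((summable_sum he).mul_left _)

theorem summable_conditional_pow_mul_sub_add {y : ℕ → ℝ} (hy : ∀ n, |y n| ≤ 1)
    (hy0 : Tendsto y atTop (𝓝 0)) {a : ℕ} (hya : Summable fun n => (y (n + a) - y n) ^ 2)
    (m : ℕ) : Summable (fun n => y n ^ m * (y (n + a) - y n)) (conditional ℕ) := by
  have hm : (0 : ℝ) < m + 1 := by positivity
  have htel : Summable (fun n => y (n + a) ^ (m + 1) / (m + 1) - y n ^ (m + 1) / (m + 1))
      (conditional ℕ) :=
    summable_conditional_sub_add_of_tendsto_zero (b := fun n => y n ^ (m + 1) / (m + 1))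
      (by simpa using (hy0.pow (m + 1)).div_const ((m : ℝ) + 1)) a
  refine htel.trans_sub (Summable.mono_filter ?_ le_atTop)
  refine Summable.of_norm_bounded (g := fun n => (m + 1) * (y (n + a) - y n) ^ 2)
    (hya.mul_left _) fun n => ?_
  have h := norm_prod_sub_pow_sub_mul_sum_le (range (m + 1)) (fun _ => y (n + a))
    (fun _ _ => hy (n + a)) (hy n)
  simp only [prod_const, card_range, sum_const, add_tsub_cancel_right, nsmul_eq_mul,
    Real.norm_eq_abs, Nat.cast_add, Nat.cast_one] at h
  rw [Real.norm_eq_abs, show y n ^ m * (y (n + a) - y n)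
      - (y (n + a) ^ (m + 1) / (m + 1) - y n ^ (m + 1) / (m + 1))
      = -(y (n + a) ^ (m + 1) - y n ^ (m + 1) - y n ^ m * ((m + 1) * (y (n + a) - y n))) / (m + 1)
      by field_simp; ring, abs_div, abs_neg, abs_of_pos hm, div_le_iff₀ hm]
  calc _ ≤ ((m + 1) * |y (n + a) - y n|) ^ 2 := h
    _ = _ := by rw [mul_pow, sq_abs]; ring

theorem re_mul_conj (u v : ℂ) :
    (u * (starRingEnd ℂ) v).re = (‖u‖ ^ 2 + ‖v‖ ^ 2 - ‖u - v‖ ^ 2) / 2 := by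
  simp only [Complex.sq_norm, Complex.normSq_apply, Complex.mul_re, Complex.conj_re,
    Complex.conj_im, Complex.sub_re, Complex.sub_im]
  ring

theorem norm_mul_conj_sub_mul_conj_le {u v w : ℂ} (hv : ‖v‖ ≤ 1) (hw : ‖w‖ ≤ 1) :
    ‖u * (starRingEnd ℂ) v - w * (starRingEnd ℂ) w‖ ≤ ‖u - w‖ + ‖v - w‖ := by
  rw [show u * (starRingEnd ℂ) v - w * (starRingEnd ℂ) w
    = (u - w) * (starRingEnd ℂ) v + w * (starRingEnd ℂ) (v - w) by simp only [map_sub]; ring]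
  refine (norm_add_le _ _).trans ?_
  simp only [norm_mul, Complex.norm_conj]
  gcongr
  · exact mul_le_of_le_one_right (norm_nonneg _) hv
  · exact mul_le_of_le_one_left (norm_nonneg _) hw

theorem sq_norm_sq_sub_norm_sq_le {E : Type*} [SeminormedAddCommGroup E] {u v : E}
    (hu : ‖u‖ ≤ 1) (hv : ‖v‖ ≤ 1) : (‖u‖ ^ 2 - ‖v‖ ^ 2) ^ 2 ≤ 4 * ‖u - v‖ ^ 2 := by
  have h : (‖u‖ - ‖v‖) ^ 2 ≤ ‖u - v‖ ^ 2 := sq_le_sq' (abs_le.1 (abs_norm_sub_norm_le u v)).1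
    (abs_le.1 (abs_norm_sub_norm_le u v)).2
  calc (‖u‖ ^ 2 - ‖v‖ ^ 2) ^ 2 = (‖u‖ + ‖v‖) ^ 2 * (‖u‖ - ‖v‖) ^ 2 := by ring
    _ ≤ 2 ^ 2 * ‖u - v‖ ^ 2 := by gcongr; linarith
    _ = _ := by norm_num

theorem summable_conditional_pow_mul_re_mul_conj_sub {α : ℕ → ℂ} (hα : ∀ n, ‖α n‖ ≤ 1)
    (hδ : Summable fun n => ‖α (n + 1) - α n‖ ^ 2) (h0 : Tendsto α atTop (𝓝 0)) (m a b : ℕ) :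
    Summable (fun n => (‖α n‖ ^ 2) ^ m * ((α (n + a) * (starRingEnd ℂ) (α (n + b))).re
      - ‖α n‖ ^ 2)) (conditional ℕ) := by
  have hq1 : ∀ n, |‖α n‖ ^ 2| ≤ 1 := fun n => by
    rw [abs_of_nonneg (by positivity)]
    exact pow_le_one₀ (norm_nonneg _) (hα n)
  have hq0 : Tendsto (fun n => ‖α n‖ ^ 2) atTop (𝓝 0) := by simpa using h0.norm.pow 2
  have hq : ∀ c, Summable (fun n => (‖α n‖ ^ 2) ^ m * (‖α (n + c)‖ ^ 2 - ‖α n‖ ^ 2))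
      (conditional ℕ) := fun c =>
    summable_conditional_pow_mul_sub_add hq1 hq0 (Summable.of_nonneg_of_le (fun _ => sq_nonneg _)
      (fun _ => sq_norm_sq_sub_norm_sq_le (hα _) (hα _))
      ((summable_sq_norm_sub_add hδ c 0).mul_left 4)) m
  have hab : Summable fun n => (‖α n‖ ^ 2) ^ m * (‖α (n + a) - α (n + b)‖ ^ 2 / 2) := by
    refine Summable.of_nonneg_of_le (fun _ => by positivity) (fun n => ?_)
      ((summable_sq_norm_sub_add hδ a b).div_const 2)
    exact mul_le_of_le_one_left (by positivity) (pow_le_one₀ (by positivity) (abs_le.1 (hq1 n)).2)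
  refine ((((hq a).add (hq b)).mul_left (1 / 2)).sub (hab.mono_filter le_atTop)).congr fun n => ?_
  rw [re_mul_conj]
  ring

theorem summable_re_prod_mul_conj_sub {α : ℕ → ℂ} (hα : ∀ n, ‖α n‖ ≤ 1)
    (hδ : Summable fun n => ‖α (n + 1) - α n‖ ^ 2) {ι : Type*} (s : Finset ι) (a b : ι → ℕ) :
    Summable fun n => (∏ j ∈ s, α (n + a j) * (starRingEnd ℂ) (α (n + b j))).re
      - (‖α n‖ ^ 2) ^ #s
      - (‖α n‖ ^ 2) ^ (#s - 1) * ∑ j ∈ s, ((α (n + a j) * (starRingEnd ℂ) (α (n + b j))).re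
        - ‖α n‖ ^ 2) := by
  have he : ∀ c, Summable fun n => ‖α (n + c) - α n‖ ^ 2 := fun c =>
    summable_sq_norm_sub_add hδ c 0
  refine Summable.of_norm_bounded (summable_sq_sum s
    (e := fun j n => ‖α (n + a j) - α n‖ + ‖α (n + b j) - α n‖) fun j _ =>
      Summable.of_nonneg_of_le (fun _ => sq_nonneg _) (fun _ => add_sq_le)
        (((he (a j)).add (he (b j))).mul_left 2)) fun n => ?_
  have hp : ∀ j ∈ s, ‖α (n + a j) * (starRingEnd ℂ) (α (n + b j))‖ ≤ 1 := fun j _ => by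
    rw [norm_mul, Complex.norm_conj]
    exact mul_le_one₀ (hα _) (norm_nonneg _) (hα _)
  have hc : ‖((‖α n‖ ^ 2 : ℝ) : ℂ)‖ ≤ 1 := by
    rw [Complex.ofReal_pow, ← Complex.mul_conj', norm_mul, Complex.norm_conj]
    exact mul_le_one₀ (hα _) (norm_nonneg _) (hα _)
  have hre : (∏ j ∈ s, α (n + a j) * (starRingEnd ℂ) (α (n + b j))).re
      - (‖α n‖ ^ 2) ^ #s
      - (‖α n‖ ^ 2) ^ (#s - 1) * ∑ j ∈ s, ((α (n + a j) * (starRingEnd ℂ) (α (n + b j))).re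
        - ‖α n‖ ^ 2)
      = (∏ j ∈ s, α (n + a j) * (starRingEnd ℂ) (α (n + b j)) - ((‖α n‖ ^ 2 : ℝ) : ℂ) ^ #s
        - ((‖α n‖ ^ 2 : ℝ) : ℂ) ^ (#s - 1) * ∑ j ∈ s, (α (n + a j) * (starRingEnd ℂ) (α (n + b j))
          - ((‖α n‖ ^ 2 : ℝ) : ℂ))).re := by
    simp only [Complex.sub_re, ← Complex.ofReal_pow, Complex.re_ofReal_mul, Complex.re_sum,
      Complex.ofReal_re]
  rw [hre, Real.norm_eq_abs]
  refine (Complex.abs_re_le_norm _).trans ((norm_prod_sub_pow_sub_mul_sum_le s _ hp hc).trans ?_)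
  gcongr with j
  rw [Complex.ofReal_pow, ← Complex.mul_conj']
  exact norm_mul_conj_sub_mul_conj_le (hα _) (hα _)

theorem stmt_10_general (k : ℕ) (t : ℕ → ℕ) (α : ℕ → ℂ)
    (hα : ∀ n, ‖α n‖ < 1)
    (hδ : Summable (fun n => ‖α (n + 1) - α n‖ ^ 2))
    (h0 : Tendsto α atTop (nhds 0)) :
    ∃ S : ℝ, Tendsto
      (fun N => ∑ n ∈ Finset.range N,
        ((∏ j ∈ Finset.range k,
            α (n + t (2 * j)) * (starRingEnd ℂ) (α (n + t (2 * j + 1)))).re -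
          ‖α n‖ ^ (2 * k)))
      atTop (nhds S) := by
  have hα' : ∀ n, ‖α n‖ ≤ 1 := fun n => (hα n).le
  have hlin := summable_sum (s := range k) fun j _ =>
    summable_conditional_pow_mul_re_mul_conj_sub hα' hδ h0 (k - 1) (t (2 * j)) (t (2 * j + 1))
  have herr := summable_re_prod_mul_conj_sub hα' hδ (range k) (fun j => t (2 * j))
    (fun j => t (2 * j + 1))
  refine summable_conditional_nat_iff.1 ((hlin.add (herr.mono_filter le_atTop)).congr fun n => ?_)
  rw [card_range, ← mul_sum, pow_mul]
  ring

/-- If `α` lies in the unit disk, has square-summable forward differences and tends to `0`,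
then the series `Σ_n ( Re(∏_{j=1}^k α_{n+t_{2j−1}} conj(α_{n+t_{2j}})) − |α_n|^{2k} )`
converges (its partial sums converge).
(Here `t (2*j)`, `t (2*j+1)` are the 0-based versions of `t_{2j+1}`, `t_{2j+2}`.) -/
theorem stmt_10 (k l : ℕ) (hk : 0 < k) (hl : 0 < l) (t : ℕ → ℕ)
    (ht : ∀ i < 2 * k, t i ≤ l) (α : ℕ → ℂ)
    (hα : ∀ n, ‖α n‖ < 1)
    (hδ : Summable (fun n => ‖α (n + 1) - α n‖ ^ 2))
    (h0 : Tendsto α atTop (nhds 0)) :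
    ∃ S : ℝ, Tendsto
      (fun N => ∑ n ∈ Finset.range N,
        ((∏ j ∈ Finset.range k,
            α (n + t (2 * j)) * (starRingEnd ℂ) (α (n + t (2 * j + 1)))).re -
          ‖α n‖ ^ (2 * k)))
      atTop (nhds S) :=
  stmt_10_general k t α hα hδ h0
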